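/- Assume d ≥ 1, L ≥ 1, γ > 0, λ > 0. There exists ᾱ > 0 such that for every step size α with 0 < α ≤ ᾱ and every initialization (κ₀, ν₀) ∈ [−1, 1]², the PGD iterates (κ_t, ν_t) satisfy: (a) the distance between successive iterates tends to zero, i.e. |κ_{t+1} − κ_t| + |ν_{t+1} − ν_t| → 0 as t → ∞; and (b) every accumulation point (κ, ν) of the sequence (κ_t, ν_t) satisfies (1 − κ²)·∂κR(κ, ν) = 0 and (1 − ν²)·∂νR(κ, ν) = 0. -/

import Mathlib

open MeasureTheory ProbabilityTheory Real Filter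

noncomputable def erf (u : ℝ) : ℝ := 2 / Real.sqrt Real.pi * ∫ r in (0:ℝ)..u, Real.exp (-r ^ 2)

noncomputable def zeta (t s : ℝ) : ℝ := ∫ g, erf (t + g) ^ 2 ∂(gaussianReal 0 s.toNNReal)

/-- The reduced risk `R(κ, ν)` on the invariant manifold. -/
noncomputable def Rred (d L : ℕ) (γ lam ε : ℝ) (κ ν : ℝ) : ℝ :=
  γ ^ 2 - 2 * γ ^ 2 * ν * erf (lam * Real.sqrt ((d : ℝ) / 2) * κ /
      Real.sqrt (1 + 2 * lam ^ 2 * γ ^ 2))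
    + γ ^ 2 * zeta (lam * Real.sqrt ((d : ℝ) / 2) * κ) (lam ^ 2 * γ ^ 2)
    + ((L : ℝ) - 1) * zeta 0 (lam ^ 2) + ε ^ 2

/-- Partial derivative `∂κR` of the reduced risk with respect to its first argument. -/
noncomputable def dkR (d L : ℕ) (γ lam ε : ℝ) (κ ν : ℝ) : ℝ :=
  deriv (fun x => Rred d L γ lam ε x ν) κ

/-- Partial derivative `∂νR` of the reduced risk with respect to its second argument. -/
noncomputable def dvR (d L : ℕ) (γ lam ε : ℝ) (κ ν : ℝ) : ℝ :=
  deriv (fun y => Rred d L γ lam ε κ y) ν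

/-- The PGD map `g_α`. -/
noncomputable def pgd (d L : ℕ) (γ lam ε α : ℝ) (p : ℝ × ℝ) : ℝ × ℝ :=
  ((p.1 - α * dkR d L γ lam ε p.1 p.2 * (1 - p.1 ^ 2)) /
      Real.sqrt (1 + α ^ 2 * (dkR d L γ lam ε p.1 p.2) ^ 2 * (1 - p.1 ^ 2)),
   (p.2 - α * dvR d L γ lam ε p.1 p.2 * (1 - p.2 ^ 2)) /
      Real.sqrt (1 + α ^ 2 * (dvR d L γ lam ε p.1 p.2) ^ 2 * (1 - p.2 ^ 2)))

/-- The square `[−1, 1]²`. -/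
def sqIcc : Set (ℝ × ℝ) := {p | p.1 ∈ Set.Icc (-1 : ℝ) 1 ∧ p.2 ∈ Set.Icc (-1 : ℝ) 1}

/-! The reduced risk is `C²` on `ℝ²`: `erf` is smooth with bounded derivatives, and Gaussian
smoothing preserves this. On the compact convex square its gradient is therefore bounded and
Lipschitz, and for small `α` each coordinate of the PGD map moves against its partial derivative
far enough that the quadratic upper bound for `R` yields the sufficient decrease
`R (g_α p) + ‖g_α p - p‖² / (12 α) ≤ R p`. Since `R` is bounded below on the square, the decreases
`R p_t - R p_{t+1}` tend to zero and so do the steps. An accumulation point is then a fixed point of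
the continuous map `g_α`, and a coordinate of the normalised step is fixed only where
`(1 - κ²) ∂R = 0`. -/

open Set
open scoped Topology NNReal Interval

lemma contDiff_two_of_hasDerivAt {𝕜 F : Type*} [NontriviallyNormedField 𝕜] [NormedAddCommGroup F]
    [NormedSpace 𝕜 F] {f f' f'' : 𝕜 → F} (hf : ∀ x, HasDerivAt f (f' x) x)
    (hf' : ∀ x, HasDerivAt f' (f'' x) x) (hf'' : Continuous f'') : ContDiff 𝕜 2 f := by
  rw [show (2 : WithTop ℕ∞) = 1 + 1 from rfl, contDiff_succ_iff_deriv,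
    funext fun x => (hf x).deriv, contDiff_one_iff_deriv, funext fun x => (hf' x).deriv]
  exact ⟨fun x => (hf x).differentiableAt, by simp, fun x => (hf' x).differentiableAt, hf''⟩

section IntegralCompAdd

variable {E : Type*} [NormedAddCommGroup E] [NormedSpace ℝ E] {μ : Measure ℝ} [IsFiniteMeasure μ]
  {ψ ψ' : ℝ → E} {C C' : ℝ}

lemma continuous_integral_comp_add (hψ : Continuous ψ) (hb : ∀ x, ‖ψ x‖ ≤ C) :
    Continuous fun t => ∫ g, ψ (t + g) ∂μ :=
  continuous_of_dominated (fun _ => (hψ.comp (by fun_prop)).aestronglyMeasurable)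
    (fun t => Eventually.of_forall fun g => hb (t + g)) (integrable_const C)
    (Eventually.of_forall fun g => hψ.comp (by fun_prop))

lemma hasDerivAt_integral_comp_add (hψ : ∀ x, HasDerivAt ψ (ψ' x) x) (hψ' : Continuous ψ')
    (hb : ∀ x, ‖ψ x‖ ≤ C) (hb' : ∀ x, ‖ψ' x‖ ≤ C') (t : ℝ) :
    HasDerivAt (fun t => ∫ g, ψ (t + g) ∂μ) (∫ g, ψ' (t + g) ∂μ) t := by
  have hc : Continuous ψ := continuous_iff_continuousAt.2 fun x => (hψ x).continuousAt
  refine (hasDerivAt_integral_of_dominated_loc_of_deriv_le (bound := fun _ => C') univ_mem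
    (Eventually.of_forall fun s => (hc.comp (by fun_prop)).aestronglyMeasurable)
    (Integrable.of_bound (hc.comp (by fun_prop)).aestronglyMeasurable C
      (Eventually.of_forall fun g => hb (t + g)))
    (hψ'.comp (by fun_prop)).aestronglyMeasurable
    (Eventually.of_forall fun g s _ => hb' (s + g)) (integrable_const C')
    (Eventually.of_forall fun g s _ => ?_)).2
  simpa using (hψ (s + g)).comp_add_const s g

lemma contDiff_two_integral_comp_add {ψ'' : ℝ → E} {C'' : ℝ} (hψ : ∀ x, HasDerivAt ψ (ψ' x) x)
    (hψ' : ∀ x, HasDerivAt ψ' (ψ'' x) x) (hψ'' : Continuous ψ'') (hb : ∀ x, ‖ψ x‖ ≤ C)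
    (hb' : ∀ x, ‖ψ' x‖ ≤ C') (hb'' : ∀ x, ‖ψ'' x‖ ≤ C'') : ContDiff ℝ 2 fun t => ∫ g, ψ (t + g) ∂μ :=
  have hc' : Continuous ψ' := continuous_iff_continuousAt.2 fun x => (hψ' x).continuousAt
  contDiff_two_of_hasDerivAt (hasDerivAt_integral_comp_add hψ hc' hb hb')
    (hasDerivAt_integral_comp_add hψ' hψ'' hb' hb'') (continuous_integral_comp_add hψ'' hb'')

end IntegralCompAdd

lemma Convex.le_add_fderiv_add_mul_norm_sq {E : Type*} [NormedAddCommGroup E] [NormedSpace ℝ E]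
    {f : E → ℝ} {s : Set E} {K : ℝ≥0} (hs : Convex ℝ s) (hf : ∀ z ∈ s, DifferentiableAt ℝ f z)
    (hlip : LipschitzOnWith K (fderiv ℝ f) s) {x y : E} (hx : x ∈ s) (hy : y ∈ s) :
    f y ≤ f x + fderiv ℝ f x (y - x) + K * ‖y - x‖ ^ 2 := by
  have hseg := hs.segment_subset hx hy
  have key := (convex_segment x y).norm_image_sub_le_of_norm_fderiv_le'
    (fun z hz => hf z (hseg hz))
    (fun z hz => (hlip.norm_sub_le (hseg hz) hx).trans
      (mul_le_mul_of_nonneg_left (norm_sub_le_of_mem_segment hz) K.2))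
    (left_mem_segment ℝ x y) (right_mem_segment ℝ x y)
  rw [Real.norm_eq_abs] at key
  nlinarith [le_abs_self (f y - f x - fderiv ℝ f x (y - x))]

theorem tendsto_dist_iterate_succ_of_sufficient_decrease {X : Type*} [PseudoMetricSpace X]
    {G : X → X} {F : X → ℝ} {s : Set X} {c : ℝ} (hc : 0 < c) (hGs : MapsTo G s s)
    (hFs : BddBelow (F '' s)) (hdec : ∀ q ∈ s, F (G q) + c * dist (G q) q ^ 2 ≤ F q)
    {p₀ : X} (hp₀ : p₀ ∈ s) :
    Tendsto (fun t => dist (G^[t + 1] p₀) (G^[t] p₀)) atTop (𝓝 0) := by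
  set u : ℕ → X := fun t => G^[t] p₀
  have hstep (t : ℕ) : F (u (t + 1)) + c * dist (u (t + 1)) (u t) ^ 2 ≤ F (u t) := by
    simpa only [u, Function.iterate_succ_apply'] using hdec _ (hGs.iterate t hp₀)
  have hanti : Antitone (F ∘ u) := antitone_nat_of_succ_le fun t => by
    have := mul_nonneg hc.le (sq_nonneg (dist (u (t + 1)) (u t)))
    simp only [Function.comp_apply]
    linarith [hstep t]
  have hlim := tendsto_atTop_ciInf hanti (hFs.mono (range_subset_iff.2 fun t =>
    mem_image_of_mem F (hGs.iterate t hp₀)))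
  have hgap : Tendsto (fun t => (F (u t) - F (u (t + 1))) / c) atTop (𝓝 0) := by
    simpa using (hlim.sub (hlim.comp (tendsto_add_atTop_nat 1))).div_const c
  have hsq : Tendsto (fun t => dist (u (t + 1)) (u t) ^ 2) atTop (𝓝 0) :=
    squeeze_zero (fun t => sq_nonneg _) (fun t => by rw [le_div_iff₀ hc]; linarith [hstep t]) hgap
  simpa only [Function.comp_def, Real.sqrt_sq dist_nonneg, Real.sqrt_zero] using
    (Real.continuous_sqrt.tendsto 0).comp hsq

theorem MapClusterPt.isFixedPt_of_tendsto_dist {X ι : Type*} [MetricSpace X] {l : Filter ι}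
    {u : ι → X} {G : X → X} {p : X} (hp : MapClusterPt p l u) (hG : ContinuousAt G p)
    (h : Tendsto (fun i => dist (G (u i)) (u i)) l (𝓝 0)) : Function.IsFixedPt G p := by
  have hcl : MapClusterPt (dist (G p) p) l fun i => dist (G (u i)) (u i) :=
    hp.continuousAt_comp (f := fun y => dist (G y) y) (hG.dist continuousAt_id)
  exact dist_eq_zero.1 (eq_of_nhds_neBot (hcl.clusterPt.mono h))

noncomputable def erfDeriv (u : ℝ) : ℝ := 2 / √π * exp (-u ^ 2)

lemma hasDerivAt_erf (u : ℝ) : HasDerivAt erf (erfDeriv u) u := by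
  have hc : Continuous fun r : ℝ => exp (-r ^ 2) := by fun_prop
  exact (intervalIntegral.integral_hasDerivAt_right (hc.intervalIntegrable _ _)
    (hc.stronglyMeasurableAtFilter _ _) hc.continuousAt).const_mul _

lemma hasDerivAt_erfDeriv (u : ℝ) : HasDerivAt erfDeriv (-2 * u * erfDeriv u) u := by
  have h : HasDerivAt (fun u : ℝ => -u ^ 2) (-(2 * u)) u := by
    simpa using (hasDerivAt_pow 2 u).fun_neg
  exact (h.exp.const_mul (2 / √π)).congr_deriv (by unfold erfDeriv; ring)

@[fun_prop]
lemma continuous_erf : Continuous erf :=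
  continuous_iff_continuousAt.2 fun u => (hasDerivAt_erf u).continuousAt

@[fun_prop]
lemma continuous_erfDeriv : Continuous erfDeriv := by unfold erfDeriv; fun_prop

lemma two_div_sqrt_pi_le_two : 2 / √π ≤ 2 := by
  rw [div_le_iff₀ (Real.sqrt_pos.2 pi_pos)]
  nlinarith [Real.one_le_sqrt.2 (by linarith [pi_gt_three] : (1:ℝ) ≤ π)]

lemma abs_erf_le (u : ℝ) : |erf u| ≤ 2 := by
  have hint : Integrable fun r : ℝ => exp (-r ^ 2) := by
    simpa using integrable_exp_neg_mul_sq (b := 1) one_pos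
  have htot : ∫ r : ℝ, exp (-r ^ 2) = √π := by simpa using integral_gaussian 1
  have hle : |∫ r in (0:ℝ)..u, exp (-r ^ 2)| ≤ √π := by
    calc |∫ r in (0:ℝ)..u, exp (-r ^ 2)| ≤ ∫ r in Ι 0 u, ‖exp (-r ^ 2)‖ :=
          (Real.norm_eq_abs _).symm.trans_le intervalIntegral.norm_integral_le_integral_norm_uIoc
      _ ≤ ∫ r, ‖exp (-r ^ 2)‖ :=
          setIntegral_le_integral hint.norm (Eventually.of_forall fun _ => norm_nonneg _)
      _ = √π := by simp [htot]
  rw [erf, abs_mul, abs_of_pos (by positivity : 0 < 2 / √π)]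
  calc 2 / √π * |∫ r in (0:ℝ)..u, exp (-r ^ 2)| ≤ 2 / √π * √π := by gcongr
    _ = 2 := div_mul_cancel₀ _ (Real.sqrt_pos.2 pi_pos).ne'

lemma abs_erfDeriv_le (u : ℝ) : |erfDeriv u| ≤ 2 := by
  rw [erfDeriv, abs_of_pos (by positivity)]
  calc 2 / √π * exp (-u ^ 2) ≤ 2 / √π * 1 := by
        gcongr; exact exp_le_one_iff.2 (neg_nonpos.2 (sq_nonneg u))
    _ ≤ 2 := by simpa using two_div_sqrt_pi_le_two

lemma abs_mul_erfDeriv_le (u : ℝ) : |-2 * u * erfDeriv u| ≤ 2 := by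
  have h : 2 * |u| * exp (-u ^ 2) ≤ 1 :=
    calc 2 * |u| * exp (-u ^ 2) ≤ exp (u ^ 2) * exp (-u ^ 2) := by
          -- `2|u| ≤ 1 + u² ≤ exp (u²)`
          gcongr; nlinarith [add_one_le_exp (u ^ 2), sq_nonneg (|u| - 1), sq_abs u]
      _ = 1 := by rw [← exp_add, add_neg_cancel, exp_zero]
  calc |-2 * u * erfDeriv u| = 2 / √π * (2 * |u| * exp (-u ^ 2)) := by
        rw [erfDeriv, abs_mul, abs_mul, abs_mul, abs_of_pos (by positivity : 0 < 2 / √π),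
          abs_of_pos (exp_pos _), abs_neg, abs_two]
        ring
    _ ≤ 2 / √π * 1 := by gcongr
    _ ≤ 2 := by simpa using two_div_sqrt_pi_le_two

lemma contDiff_zeta_left (s : ℝ) : ContDiff ℝ 2 fun t => zeta t s := by
  have hψ (x : ℝ) : HasDerivAt (fun x => erf x ^ 2) (2 * erf x * erfDeriv x) x :=
    ((hasDerivAt_erf x).pow 2).congr_deriv (by ring)
  have hψ' (x : ℝ) : HasDerivAt (fun x => 2 * erf x * erfDeriv x)
      (2 * erfDeriv x * erfDeriv x + 2 * erf x * (-2 * x * erfDeriv x)) x :=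
    (((hasDerivAt_erf x).const_mul 2).mul (hasDerivAt_erfDeriv x)).congr_deriv (by ring)
  refine contDiff_two_integral_comp_add (C := 4) (C' := 8) (C'' := 16) hψ hψ'
    (by fun_prop) (fun x => ?_) (fun x => ?_) (fun x => ?_)
  · rw [Real.norm_eq_abs, abs_pow]
    nlinarith [abs_erf_le x, abs_nonneg (erf x)]
  · rw [Real.norm_eq_abs, abs_mul, abs_mul, abs_two]
    have := abs_erf_le x; have := abs_erfDeriv_le x
    calc 2 * |erf x| * |erfDeriv x| ≤ 2 * 2 * 2 := by gcongr
      _ = 8 := by norm_num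
  · have := abs_erf_le x; have := abs_erfDeriv_le x; have := abs_mul_erfDeriv_le x
    calc ‖2 * erfDeriv x * erfDeriv x + 2 * erf x * (-2 * x * erfDeriv x)‖
        ≤ 2 * |erfDeriv x| * |erfDeriv x| + 2 * |erf x| * |-2 * x * erfDeriv x| := by
          rw [Real.norm_eq_abs]
          refine (abs_add_le _ _).trans_eq ?_
          rw [abs_mul, abs_mul, abs_mul, abs_mul, abs_two]
      _ ≤ 2 * 2 * 2 + 2 * 2 * 2 := by gcongr
      _ = 16 := by norm_num

lemma contDiff_Rred (d L : ℕ) (γ lam ε : ℝ) :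
    ContDiff ℝ 2 fun p : ℝ × ℝ => Rred d L γ lam ε p.1 p.2 := by
  have := contDiff_zeta_left (lam ^ 2 * γ ^ 2)
  have := contDiff_two_of_hasDerivAt hasDerivAt_erf hasDerivAt_erfDeriv (by fun_prop)
  unfold Rred
  fun_prop

noncomputable def pgdStep (α x D : ℝ) : ℝ :=
  (x - α * D * (1 - x ^ 2)) / √(1 + α ^ 2 * D ^ 2 * (1 - x ^ 2))

section pgdStep

variable {α x D : ℝ}

lemma one_sub_sq_nonneg_of_mem_Icc (hx : x ∈ Icc (-1 : ℝ) 1) : 0 ≤ 1 - x ^ 2 := by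
  nlinarith [hx.1, hx.2]

lemma pgdStep_mem_Icc (hx : x ∈ Icc (-1 : ℝ) 1) : pgdStep α x D ∈ Icc (-1 : ℝ) 1 := by
  have hu := one_sub_sq_nonneg_of_mem_Icc hx
  have hS : 0 < √(1 + α ^ 2 * D ^ 2 * (1 - x ^ 2)) := Real.sqrt_pos.2 (by positivity)
  have hsq : (x - α * D * (1 - x ^ 2)) ^ 2 ≤ 1 + α ^ 2 * D ^ 2 * (1 - x ^ 2) := by
    have : 1 + α ^ 2 * D ^ 2 * (1 - x ^ 2) - (x - α * D * (1 - x ^ 2)) ^ 2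
        = (1 - x ^ 2) * (1 + α * D * x) ^ 2 := by ring
    nlinarith [mul_nonneg hu (sq_nonneg (1 + α * D * x))]
  rw [mem_Icc, ← abs_le, pgdStep, abs_div, abs_of_pos hS, div_le_one hS]
  exact Real.abs_le_sqrt hsq

/-- With `a = α D`, `u = 1 - x²` and `S = √(1 + a²u) ∈ [1, 1 + a²u/2]`, the step `δ` solves
`δ S = -x (S - 1) - a u`, whose first term is of order `a²u` and hence dominated by `a u`. -/
lemma pgdStep_sub_bounds (hx : x ∈ Icc (-1 : ℝ) 1) (hD : |α * D| ≤ 1 / 2) :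
    α * D * (pgdStep α x D - x) ≤ -(2 / 3) * ((α * D) ^ 2 * (1 - x ^ 2)) ∧
      (pgdStep α x D - x) ^ 2 ≤ 25 / 16 * ((α * D) ^ 2 * (1 - x ^ 2)) := by
  set u := 1 - x ^ 2
  set a := α * D
  have hu0 : 0 ≤ u := one_sub_sq_nonneg_of_mem_Icc hx
  have hu1 : u ≤ 1 := by linarith [sq_nonneg x]
  have hw0 : 0 ≤ a ^ 2 * u := by positivity
  set S := √(1 + a ^ 2 * u) with hS
  have hS1 : 1 ≤ S := Real.one_le_sqrt.2 (by linarith)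
  have hS2 : S ≤ 1 + a ^ 2 * u / 2 := Real.sqrt_one_add_le (by linarith)
  set δ := pgdStep α x D - x with hδ
  have hδS : δ * S = -(x * (S - 1)) - a * u := by
    rw [hδ, pgdStep, show α ^ 2 * D ^ 2 = a ^ 2 by ring, ← hS, sub_mul,
      div_mul_cancel₀ _ (by positivity)]
    ring
  have he : |x * (S - 1)| ≤ |a| * u / 4 := by
    have := mul_le_mul_of_nonneg_left hD (mul_nonneg (abs_nonneg a) hu0)
    rw [abs_mul, abs_of_nonneg (by linarith : 0 ≤ S - 1)]
    nlinarith [abs_le.2 hx, abs_nonneg x, sq_abs a]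
  constructor
  · have h : a * (δ * S) ≤ -(3 / 4) * (a ^ 2 * u) := by
      rw [hδS]
      nlinarith [neg_abs_le (a * (x * (S - 1))), abs_mul a (x * (S - 1)), abs_nonneg a, sq_abs a]
    have hw : a ^ 2 * u ≤ 1 / 4 := by
      nlinarith [sq_abs a, abs_nonneg a, mul_le_of_le_one_right (sq_nonneg a) hu1]
    have hS98 : S ≤ 9 / 8 := by linarith
    by_contra! hlt
    nlinarith [mul_le_mul_of_nonneg_left hS98 hw0,
      mul_lt_mul_of_pos_right hlt (by linarith : 0 < S)]
  · have hle : |δ * S| ≤ 5 / 4 * (|a| * u) := by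
      rw [hδS]
      calc |-(x * (S - 1)) - a * u| ≤ |-(x * (S - 1))| + |a * u| := abs_sub _ _
        _ = |x * (S - 1)| + |a * u| := by rw [abs_neg]
        _ ≤ 5 / 4 * (|a| * u) := by rw [abs_mul a u, abs_of_nonneg hu0]; linarith
    calc δ ^ 2 ≤ |δ * S| ^ 2 := by
          rw [sq_abs, mul_pow]; exact le_mul_of_one_le_right (sq_nonneg δ) (one_le_pow₀ hS1)
      _ ≤ (5 / 4 * (|a| * u)) ^ 2 := by gcongr
      _ = 25 / 16 * (a ^ 2 * u) * u := by rw [mul_pow, mul_pow, sq_abs]; ring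
      _ ≤ 25 / 16 * (a ^ 2 * u) := mul_le_of_le_one_right (by positivity) hu1

lemma pgdStep_descent (hx : x ∈ Icc (-1 : ℝ) 1) (hD : |α * D| ≤ 1 / 2) :
    6 * α * D * (pgdStep α x D - x) ≤ -(pgdStep α x D - x) ^ 2 := by
  obtain ⟨h₁, h₂⟩ := pgdStep_sub_bounds hx hD
  have := mul_nonneg (sq_nonneg (α * D)) (one_sub_sq_nonneg_of_mem_Icc hx)
  linarith

lemma mul_eq_zero_of_pgdStep_eq (hx : x ∈ Icc (-1 : ℝ) 1) (hα : α ≠ 0) (hD : |α * D| ≤ 1 / 2)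
    (h : pgdStep α x D = x) : (1 - x ^ 2) * D = 0 := by
  have h₁ := (pgdStep_sub_bounds hx hD).1
  rw [h, sub_self, mul_zero] at h₁
  have : (α * D) ^ 2 * (1 - x ^ 2) = 0 := by
    have := mul_nonneg (sq_nonneg (α * D)) (one_sub_sq_nonneg_of_mem_Icc hx)
    linarith
  rcases mul_eq_zero.1 this with h | h
  · rw [(mul_eq_zero.1 (pow_eq_zero_iff two_ne_zero |>.1 h)).resolve_left hα, mul_zero]
  · rw [h, zero_mul]

lemma continuousAt_pgdStep (hx : x ∈ Icc (-1 : ℝ) 1) :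
    ContinuousAt (fun q : ℝ × ℝ => pgdStep α q.1 q.2) (x, D) := by
  have hpos : 0 < 1 + α ^ 2 * D ^ 2 * (1 - x ^ 2) := by
    have := one_sub_sq_nonneg_of_mem_Icc hx
    positivity
  unfold pgdStep
  exact ContinuousAt.div (by fun_prop) (by fun_prop) (Real.sqrt_pos.2 hpos).ne'

end pgdStep

lemma isCompact_sqIcc : IsCompact sqIcc := isCompact_Icc.prod isCompact_Icc

lemma isClosed_sqIcc : IsClosed sqIcc := isClosed_Icc.prod isClosed_Icc

lemma convex_sqIcc : Convex ℝ sqIcc := (convex_Icc _ _).prod (convex_Icc _ _)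

noncomputable def pgdMap (F : ℝ × ℝ → ℝ) (α : ℝ) (p : ℝ × ℝ) : ℝ × ℝ :=
  (pgdStep α p.1 (fderiv ℝ F p (1, 0)), pgdStep α p.2 (fderiv ℝ F p (0, 1)))

section pgdMap

variable {F : ℝ × ℝ → ℝ} {α : ℝ}

lemma mapsTo_pgdMap : MapsTo (pgdMap F α) sqIcc sqIcc :=
  fun _ hp => ⟨pgdStep_mem_Icc hp.1, pgdStep_mem_Icc hp.2⟩

lemma continuousAt_pgdMap (hF : ContDiff ℝ 1 F) {p : ℝ × ℝ} (hp : p ∈ sqIcc) :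
    ContinuousAt (pgdMap F α) p := by
  have hc (v : ℝ × ℝ) : Continuous fun q => fderiv ℝ F q v :=
    (hF.continuous_fderiv one_ne_zero).clm_apply continuous_const
  exact ((continuousAt_pgdStep hp.1).comp (f := fun q => (q.1, fderiv ℝ F q (1, 0)))
    (continuous_fst.prodMk (hc _)).continuousAt).prodMk
    ((continuousAt_pgdStep hp.2).comp (f := fun q => (q.2, fderiv ℝ F q (0, 1)))
      (continuous_snd.prodMk (hc _)).continuousAt)

lemma pgdMap_sufficient_decrease {K : ℝ≥0} (hF : Differentiable ℝ F)
    (hlip : LipschitzOnWith K (fderiv ℝ F) sqIcc) (hα : 0 < α) (hαK : 12 * α * K ≤ 1)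
    {q : ℝ × ℝ} (hq : q ∈ sqIcc) (hD₁ : |α * fderiv ℝ F q (1, 0)| ≤ 1 / 2)
    (hD₂ : |α * fderiv ℝ F q (0, 1)| ≤ 1 / 2) :
    F (pgdMap F α q) + 1 / (12 * α) * dist (pgdMap F α q) q ^ 2 ≤ F q := by
  set δ := pgdMap F α q - q
  have hquad := convex_sqIcc.le_add_fderiv_add_mul_norm_sq (fun z _ => hF z) hlip hq
    (mapsTo_pgdMap (F := F) (α := α) hq)
  have hlin : fderiv ℝ F q δ = fderiv ℝ F q (1, 0) * δ.1 + fderiv ℝ F q (0, 1) * δ.2 := by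
    have hδ : δ = δ.1 • ((1 : ℝ), (0 : ℝ)) + δ.2 • ((0 : ℝ), (1 : ℝ)) := by ext <;> simp
    conv_lhs => rw [hδ]
    rw [map_add, map_smul, map_smul, smul_eq_mul, smul_eq_mul, mul_comm δ.1, mul_comm δ.2]
  have h₁ : 6 * α * fderiv ℝ F q (1, 0) * δ.1 ≤ -δ.1 ^ 2 := pgdStep_descent hq.1 hD₁
  have h₂ : 6 * α * fderiv ℝ F q (0, 1) * δ.2 ≤ -δ.2 ^ 2 := pgdStep_descent hq.2 hD₂
  have hnorm : ‖δ‖ ^ 2 ≤ δ.1 ^ 2 + δ.2 ^ 2 := by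
    rw [Prod.norm_def, Real.norm_eq_abs, Real.norm_eq_abs]
    rcases max_cases |δ.1| |δ.2| with ⟨h, -⟩ | ⟨h, -⟩ <;> rw [h, sq_abs] <;>
      linarith [sq_nonneg δ.1, sq_nonneg δ.2]
  have hK : 12 * α * (K * ‖δ‖ ^ 2) ≤ ‖δ‖ ^ 2 := by
    rw [← mul_assoc]; exact mul_le_of_le_one_left (by positivity) hαK
  rw [dist_eq_norm, ← sub_nonneg]
  have : 0 ≤ 12 * α * (F q - (F (pgdMap F α q) + 1 / (12 * α) * ‖δ‖ ^ 2)) := by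
    have : 12 * α * (1 / (12 * α) * ‖δ‖ ^ 2) = ‖δ‖ ^ 2 := by field_simp
    have := mul_le_mul_of_nonneg_left hquad (by positivity : (0 : ℝ) ≤ 12 * α)
    rw [hlin] at this
    linarith
  exact nonneg_of_mul_nonneg_right this (by positivity)

end pgdMap

theorem exists_stepSize_pgdMap_asymptotics {F : ℝ × ℝ → ℝ} (hF : ContDiff ℝ 2 F) :
    ∃ abar : ℝ, 0 < abar ∧ ∀ α : ℝ, 0 < α → α ≤ abar → ∀ p₀ ∈ sqIcc,
      Tendsto (fun t => dist ((pgdMap F α)^[t + 1] p₀) ((pgdMap F α)^[t] p₀)) atTop (𝓝 0) ∧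
      ∀ p : ℝ × ℝ, MapClusterPt p atTop (fun t => (pgdMap F α)^[t] p₀) →
        (1 - p.1 ^ 2) * fderiv ℝ F p (1, 0) = 0 ∧ (1 - p.2 ^ 2) * fderiv ℝ F p (0, 1) = 0 := by
  obtain ⟨M, hM⟩ := isCompact_sqIcc.exists_bound_of_continuousOn
    (hF.continuous_fderiv two_ne_zero).continuousOn
  obtain ⟨K, hK⟩ := (hF.fderiv_right (m := 1) le_rfl).contDiffOn.exists_lipschitzOnWith
    one_ne_zero convex_sqIcc isCompact_sqIcc
  refine ⟨1 / (12 * (|M| + K + 1)), by positivity, fun α hα hαle p₀ hp₀ => ?_⟩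
  have hαC : 12 * α * (|M| + K + 1) ≤ 1 := by
    rw [le_div_iff₀ (by positivity)] at hαle
    linarith
  have hD {q : ℝ × ℝ} (hq : q ∈ sqIcc) {v : ℝ × ℝ} (hv : ‖v‖ = 1) :
      |α * fderiv ℝ F q v| ≤ 1 / 2 := by
    rw [abs_mul, abs_of_pos hα, ← Real.norm_eq_abs]
    have := (fderiv ℝ F q).le_of_opNorm_le (hM q hq) v
    rw [hv, mul_one] at this
    nlinarith [le_abs_self M, K.2, mul_le_mul_of_nonneg_left this hα.le]
  have hdist := tendsto_dist_iterate_succ_of_sufficient_decrease (by positivity) mapsTo_pgdMap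
    (isCompact_sqIcc.bddBelow_image hF.continuous.continuousOn)
    (fun q hq => pgdMap_sufficient_decrease (hF.differentiable two_ne_zero) hK hα
      (by nlinarith [abs_nonneg M]) hq (hD hq (by simp)) (hD hq (by simp))) hp₀
  refine ⟨hdist, fun p hp => ?_⟩
  have hpS : p ∈ sqIcc := isClosed_sqIcc.mem_of_mapClusterPt hp
    (Eventually.of_forall fun t => mapsTo_pgdMap.iterate t hp₀)
  have hfix : pgdMap F α p = p := hp.isFixedPt_of_tendsto_dist
    (continuousAt_pgdMap (hF.of_le one_le_two) hpS)
    (by simpa only [Function.iterate_succ_apply'] using hdist)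
  exact ⟨mul_eq_zero_of_pgdStep_eq hpS.1 hα.ne' (hD hpS (by simp)) (congrArg Prod.fst hfix),
    mul_eq_zero_of_pgdStep_eq hpS.2 hα.ne' (hD hpS (by simp)) (congrArg Prod.snd hfix)⟩

section Rred

variable (d L : ℕ) (γ lam ε : ℝ)

lemma dkR_eq_fderiv (κ ν : ℝ) :
    dkR d L γ lam ε κ ν = fderiv ℝ (fun p : ℝ × ℝ => Rred d L γ lam ε p.1 p.2) (κ, ν) (1, 0) :=
  (((contDiff_Rred d L γ lam ε).differentiable two_ne_zero _).hasFDerivAt.comp_hasDerivAt κ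
    ((hasDerivAt_id κ).prodMk (hasDerivAt_const κ ν))).deriv

lemma dvR_eq_fderiv (κ ν : ℝ) :
    dvR d L γ lam ε κ ν = fderiv ℝ (fun p : ℝ × ℝ => Rred d L γ lam ε p.1 p.2) (κ, ν) (0, 1) :=
  (((contDiff_Rred d L γ lam ε).differentiable two_ne_zero _).hasFDerivAt.comp_hasDerivAt ν
    ((hasDerivAt_const ν κ).prodMk (hasDerivAt_id ν))).deriv

lemma pgd_eq_pgdMap (α : ℝ) :
    pgd d L γ lam ε α = pgdMap (fun p : ℝ × ℝ => Rred d L γ lam ε p.1 p.2) α := by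
  ext p <;> simp only [pgd, pgdMap, pgdStep, dkR_eq_fderiv, dvR_eq_fderiv]

end Rred

lemma abs_sub_add_abs_sub_le_two_mul_dist (p q : ℝ × ℝ) :
    |p.1 - q.1| + |p.2 - q.2| ≤ 2 * dist p q := by
  rw [Prod.dist_eq, Real.dist_eq, Real.dist_eq, two_mul]
  exact add_le_add (le_max_left _ _) (le_max_right _ _)

theorem stmt9_general (d L : ℕ) (γ lam ε : ℝ) :
    ∃ abar : ℝ, 0 < abar ∧ ∀ α : ℝ, 0 < α → α ≤ abar → ∀ p₀ ∈ sqIcc,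
      (Tendsto (fun t : ℕ =>
          |((pgd d L γ lam ε α)^[t + 1] p₀).1 - ((pgd d L γ lam ε α)^[t] p₀).1|
          + |((pgd d L γ lam ε α)^[t + 1] p₀).2 - ((pgd d L γ lam ε α)^[t] p₀).2|)
        atTop (nhds 0)) ∧
      ∀ p : ℝ × ℝ, MapClusterPt p atTop (fun t : ℕ => (pgd d L γ lam ε α)^[t] p₀) →
        (1 - p.1 ^ 2) * dkR d L γ lam ε p.1 p.2 = 0 ∧
        (1 - p.2 ^ 2) * dvR d L γ lam ε p.1 p.2 = 0 := by
  obtain ⟨abar, habar, hpgd⟩ := exists_stepSize_pgdMap_asymptotics (contDiff_Rred d L γ lam ε)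
  refine ⟨abar, habar, fun α hα hαle p₀ hp₀ => ?_⟩
  obtain ⟨hdist, hcluster⟩ := hpgd α hα hαle p₀ hp₀
  rw [pgd_eq_pgdMap]
  refine ⟨squeeze_zero (fun _ => by positivity)
    (fun _ => abs_sub_add_abs_sub_le_two_mul_dist _ _) (by simpa using hdist.const_mul 2),
    fun p hp => ?_⟩
  rw [dkR_eq_fderiv, dvR_eq_fderiv]
  exact hcluster p hp

/-- For small enough step size and any initialization in `[−1,1]²`: (a) successive PGD
iterates get arbitrarily close, and (b) every accumulation point of the iterates is a
fixed point of the projected gradient field. -/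
theorem stmt9 (d L : ℕ) (hd : 1 ≤ d) (hL : 1 ≤ L) (γ lam ε : ℝ)
    (hγ : 0 < γ) (hlam : 0 < lam) (hε : 0 ≤ ε) :
    ∃ abar : ℝ, 0 < abar ∧ ∀ α : ℝ, 0 < α → α ≤ abar → ∀ p₀ ∈ sqIcc,
      (Tendsto (fun t : ℕ =>
          |((pgd d L γ lam ε α)^[t + 1] p₀).1 - ((pgd d L γ lam ε α)^[t] p₀).1|
          + |((pgd d L γ lam ε α)^[t + 1] p₀).2 - ((pgd d L γ lam ε α)^[t] p₀).2|)
        atTop (nhds 0)) ∧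
      ∀ p : ℝ × ℝ, MapClusterPt p atTop (fun t : ℕ => (pgd d L γ lam ε α)^[t] p₀) →
        (1 - p.1 ^ 2) * dkR d L γ lam ε p.1 p.2 = 0 ∧
        (1 - p.2 ^ 2) * dvR d L γ lam ε p.1 p.2 = 0 :=
  stmt9_general d L γ lam ε
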